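/- Let v₁ be a unit vector in ℝ², v₂ = v₁^⊥, v₃ = −(v₁+v₂)/√2, R ∈ SO(2), γ ∈ ℝ, and F = R(I + γ v₁ ⊗ v₂). Then f(F) = γ², where f(F) = max{ (|Fv₁|² − 1)₊, (|Fv₂|² − 1)₊, χ(max{|Fv₃|, |Fv₃^⊥|}) } with χ(z) = ((2z² − 1)₊^{1/2} − 1)₊². -/

import Mathlib

noncomputable section

def dot2 (a b : Fin 2 → ℝ) : ℝ := a 0 * b 0 + a 1 * b 1

def norm2 (a : Fin 2 → ℝ) : ℝ := Real.sqrt (dot2 a a)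

def perp (a : Fin 2 → ℝ) : Fin 2 → ℝ := ![-(a 1), a 0]

def chi (z : ℝ) : ℝ := (max (Real.sqrt (max (2 * z^2 - 1) 0) - 1) 0)^2

/-- Membership in SO(2). -/
def IsSO2 (R : Matrix (Fin 2) (Fin 2) ℝ) : Prop := R * R.transpose = 1 ∧ R.det = 1

/-! In the orthonormal frame `(v₁, v₂)` the shear `I + γ v₁ ⊗ v₂` acts by `(a, b) ↦ (a + γ b, b)`
and `R` is an isometry, so `|F (a v₁ + b v₂)|² = (a + γ b)² + b²`. The frame coordinates
`-(1, 1)/√2` of `v₃` and `(1, -1)/√2` of `v₃^⊥` give `|F v₃|² = 1 ± γ + γ²/2`, the larger being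
`1 + |γ| + γ²/2`; then `2z² - 1 = (1 + |γ|)²`, so `χ = γ²`, while `v₁` and `v₂`
contribute `0` and `γ²`. -/

open Matrix

lemma dot2_eq_dotProduct (a b : Fin 2 → ℝ) : dot2 a b = a ⬝ᵥ b := by
  simp [dot2, dotProduct, Fin.sum_univ_two]

lemma IsSO2.transpose_mul_self {R : Matrix (Fin 2) (Fin 2) ℝ} (hR : IsSO2 R) : Rᵀ * R = 1 :=
  mul_eq_one_comm.mp hR.1

lemma dot2_mulVec_of_transpose_mul_self {R : Matrix (Fin 2) (Fin 2) ℝ} (hR : Rᵀ * R = 1)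
    (x y : Fin 2 → ℝ) : dot2 (R *ᵥ x) (R *ᵥ y) = dot2 x y := by
  rw [dot2_eq_dotProduct, dot2_eq_dotProduct, dotProduct_mulVec, ← vecMul_transpose,
    vecMul_vecMul, hR, vecMul_one]

lemma one_add_smul_vecMulVec_mulVec (γ : ℝ) (u v w : Fin 2 → ℝ) :
    (1 + γ • vecMulVec u v) *ᵥ w = w + (γ * dot2 v w) • u := by
  rw [add_mulVec, one_mulVec, smul_mulVec, vecMulVec_mulVec, op_smul_eq_smul, smul_smul,
    dot2_eq_dotProduct]

@[simp] lemma perp_apply_zero (a : Fin 2 → ℝ) : perp a 0 = -a 1 := rfl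

@[simp] lemma perp_apply_one (a : Fin 2 → ℝ) : perp a 1 = a 0 := rfl

section Frame

variable (u : Fin 2 → ℝ)

lemma dot2_perp_smul_add_smul_perp (a b : ℝ) :
    dot2 (perp u) (a • u + b • perp u) = b * dot2 u u := by
  simp only [dot2, perp_apply_zero, perp_apply_one, Pi.add_apply, Pi.smul_apply, smul_eq_mul]
  ring

lemma dot2_smul_add_smul_perp_self (a b : ℝ) :
    dot2 (a • u + b • perp u) (a • u + b • perp u) = (a ^ 2 + b ^ 2) * dot2 u u := by
  simp only [dot2, perp_apply_zero, perp_apply_one, Pi.add_apply, Pi.smul_apply, smul_eq_mul]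
  ring

variable {u}

lemma one_add_smul_vecMulVec_perp_mulVec (hu : dot2 u u = 1) (γ a b : ℝ) :
    (1 + γ • vecMulVec u (perp u)) *ᵥ (a • u + b • perp u) = (a + γ * b) • u + b • perp u := by
  rw [one_add_smul_vecMulVec_mulVec, dot2_perp_smul_add_smul_perp, hu]
  module

lemma norm2_mulVec_one_add_smul_vecMulVec_perp {R : Matrix (Fin 2) (Fin 2) ℝ} (hR : Rᵀ * R = 1)
    (hu : dot2 u u = 1) (γ a b : ℝ) :
    norm2 ((R * (1 + γ • vecMulVec u (perp u))) *ᵥ (a • u + b • perp u))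
      = √((a + γ * b) ^ 2 + b ^ 2) := by
  rw [norm2, ← mulVec_mulVec, dot2_mulVec_of_transpose_mul_self hR,
    one_add_smul_vecMulVec_perp_mulVec hu, dot2_smul_add_smul_perp_self, hu, mul_one]

lemma neg_add_perp_div_sqrt_two_eq :
    (fun i => -(u i + perp u i) / √2) = -(√2)⁻¹ • u + -(√2)⁻¹ • perp u := by
  ext i
  simp only [Pi.add_apply, Pi.smul_apply, smul_eq_mul]
  ring

lemma perp_neg_add_perp_div_sqrt_two_eq :
    perp (fun i => -(u i + perp u i) / √2) = (√2)⁻¹ • u + -(√2)⁻¹ • perp u := by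
  ext i
  fin_cases i <;>
    simp only [Fin.zero_eta, Fin.mk_one, perp_apply_zero, perp_apply_one, Pi.add_apply,
      Pi.smul_apply, smul_eq_mul] <;> ring

end Frame

lemma chi_sqrt {t : ℝ} (ht : 0 ≤ t) : chi √(1 + t + t ^ 2 / 2) = t ^ 2 := by
  have hpos : 0 ≤ 1 + t + t ^ 2 / 2 := by nlinarith
  have hsq : 2 * (1 + t + t ^ 2 / 2) - 1 = (1 + t) ^ 2 := by ring
  rw [chi, Real.sq_sqrt hpos, hsq, max_eq_left (sq_nonneg _), Real.sqrt_sq (by linarith),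
    add_sub_cancel_left, max_eq_left ht]

lemma max_sqrt_quadratic (γ : ℝ) :
    max √(1 + γ + γ ^ 2 / 2) √(1 - γ + γ ^ 2 / 2) = √(1 + |γ| + |γ| ^ 2 / 2) := by
  rw [sq_abs, ← Real.sqrt_monotone.map_max, max_add_add_right, sub_eq_add_neg, max_add_add_left,
    ← abs_eq_max_neg]

theorem stmt9 (v₁ : Fin 2 → ℝ) (hv₁ : norm2 v₁ = 1)
    (v₂ : Fin 2 → ℝ) (hv₂ : v₂ = perp v₁)
    (v₃ : Fin 2 → ℝ) (hv₃ : v₃ = fun i => -(v₁ i + v₂ i) / Real.sqrt 2)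
    (R : Matrix (Fin 2) (Fin 2) ℝ) (hR : IsSO2 R) (γ : ℝ)
    (F : Matrix (Fin 2) (Fin 2) ℝ)
    (hF : F = R * (1 + γ • Matrix.vecMulVec v₁ v₂)) :
    max (max (max ((norm2 (F.mulVec v₁))^2 - 1) 0)
        (max ((norm2 (F.mulVec v₂))^2 - 1) 0))
        (chi (max (norm2 (F.mulVec v₃)) (norm2 (F.mulVec (perp v₃))))) = γ^2 := by
  subst hv₂ hv₃
  have hu : dot2 v₁ v₁ = 1 := by rwa [norm2, Real.sqrt_eq_one] at hv₁
  have stretch (a b : ℝ) : norm2 (F *ᵥ (a • v₁ + b • perp v₁)) = √((a + γ * b) ^ 2 + b ^ 2) := by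
    rw [hF]
    exact norm2_mulVec_one_add_smul_vecMulVec_perp hR.transpose_mul_self hu γ a b
  have hc : (√2)⁻¹ ^ 2 = 1 / 2 := by rw [inv_pow, Real.sq_sqrt zero_le_two, one_div]
  have n₁ : norm2 (F *ᵥ v₁) = 1 := by simpa using stretch 1 0
  have n₂ : norm2 (F *ᵥ perp v₁) = √(γ ^ 2 + 1) := by simpa using stretch 0 1
  have n₃ : norm2 (F *ᵥ fun i => -(v₁ i + perp v₁ i) / √2) = √(1 + γ + γ ^ 2 / 2) := by
    rw [neg_add_perp_div_sqrt_two_eq, stretch]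
    congr 1
    linear_combination ((1 + γ) ^ 2 + 1) * hc
  have n₄ : norm2 (F *ᵥ perp fun i => -(v₁ i + perp v₁ i) / √2) = √(1 - γ + γ ^ 2 / 2) := by
    rw [perp_neg_add_perp_div_sqrt_two_eq, stretch]
    congr 1
    linear_combination ((1 - γ) ^ 2 + 1) * hc
  rw [n₁, n₂, n₃, n₄, max_sqrt_quadratic, chi_sqrt (abs_nonneg γ), sq_abs,
    Real.sq_sqrt (by positivity)]
  simp [sq_nonneg]
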